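/- arXiv:2012.07907 — 6 statements merged into one kernel-verified Lean document; each statement's English description precedes it below -/
import Mathlib

section
/- A lattice polytope P with only finitely many gaps that is seminormal is normal. -/
open scoped Classical Pointwise

/-- A point of ℝ^n with integer coordinates. -/
def IsIntPt {n : ℕ} (x : Fin n → ℝ) : Prop := ∀ i, ∃ m : ℤ, x i = m

/-- The lattice spanned by the lattice (integer) points of `P`. -/
noncomputable def lat {n : ℕ} (P : Set (Fin n → ℝ)) : AddSubgroup (Fin n → ℝ) :=
  AddSubgroup.closure {y | y ∈ P ∧ IsIntPt y}

/-- `P` is a lattice polytope: the convex hull of finitely many integer points. -/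
def IsLatticePolytope {n : ℕ} (P : Set (Fin n → ℝ)) : Prop :=
  ∃ S : Finset (Fin n → ℝ), (∀ v ∈ S, IsIntPt v) ∧ P = convexHull ℝ (S : Set (Fin n → ℝ))

/-- `x` is a gap of `P` in the dilation `k·P`: a lattice point of `k·P` that is not a sum of
`k` lattice points of `P`. -/
def IsGapAt {n : ℕ} (P : Set (Fin n → ℝ)) (k : ℕ) (x : Fin n → ℝ) : Prop :=
  x ∈ lat P ∧ x ∈ (k : ℝ) • P ∧
    ¬ ∃ f : Fin k → (Fin n → ℝ), (∀ i, f i ∈ P ∧ f i ∈ lat P) ∧ x = ∑ i, f i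

/-- `x` is a gap of `P` (in some dilation). -/
def IsGap {n : ℕ} (P : Set (Fin n → ℝ)) (x : Fin n → ℝ) : Prop := ∃ k, IsGapAt P k x

/-- `P` is normal: for every `k`, every lattice point of `k·P` is a sum of `k` lattice points
of `P`. -/
def IsNormal {n : ℕ} (P : Set (Fin n → ℝ)) : Prop :=
  ∀ (k : ℕ) (x : Fin n → ℝ), x ∈ lat P → x ∈ (k : ℝ) • P →
    ∃ f : Fin k → (Fin n → ℝ), (∀ i, f i ∈ P ∧ f i ∈ lat P) ∧ x = ∑ i, f i

/-- `P` is seminormal: for every lattice point `x`, if `2x` and `3x` are not gaps then neither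
is `x`. -/
def IsSeminormal {n : ℕ} (P : Set (Fin n → ℝ)) : Prop :=
  ∀ x : Fin n → ℝ, x ∈ lat P → ¬ IsGap P ((2 : ℝ) • x) → ¬ IsGap P ((3 : ℝ) • x) →
    ¬ IsGap P x

/-! A gap `x` of a seminormal polytope forces `2 • x` or `3 • x` to be a gap as well, and `0` is
never a gap. A gap of maximal norm therefore cannot exist, so a polytope with finitely many gaps
has none at all. -/

theorem Set.Finite.eq_empty_of_forall_exists_smul_mem {𝕜 E : Type*} [NormedField 𝕜]
    [NormedAddCommGroup E] [NormedSpace 𝕜 E] {S : Set E} (hS : S.Finite) (h0 : (0 : E) ∉ S)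
    (hS_smul : ∀ x ∈ S, ∃ c : 𝕜, 1 < ‖c‖ ∧ c • x ∈ S) : S = ∅ := by
  refine Set.eq_empty_iff_forall_notMem.2 fun x hx => ?_
  obtain ⟨y, hy, hy_max⟩ := hS.exists_maximalFor norm S ⟨x, hx⟩
  obtain ⟨c, hc, hcy⟩ := hS_smul y hy
  have hy_pos : 0 < ‖y‖ := norm_pos_iff.2 (ne_of_mem_of_not_mem hy h0)
  have hlt : ‖y‖ < ‖c • y‖ := by
    rw [norm_smul]
    exact lt_mul_of_one_lt_left hy_pos hc
  exact (hy_max hcy hlt.le).not_gt hlt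

theorem not_isGap_zero {n : ℕ} (P : Set (Fin n → ℝ)) : ¬ IsGap P 0 := by
  rintro ⟨k, -, hmem, hnot⟩
  refine hnot ⟨fun _ => 0, fun i => ⟨?_, (lat P).zero_mem⟩, by simp⟩
  obtain ⟨p, hp, hkp⟩ := Set.mem_smul_set.1 hmem
  have hk : (k : ℝ) ≠ 0 := Nat.cast_ne_zero.2 i.pos.ne'
  rwa [← (smul_eq_zero.1 hkp).resolve_left hk]

theorem IsSeminormal.isGap_two_smul_or_isGap_three_smul {n : ℕ} {P : Set (Fin n → ℝ)}
    (hsn : IsSeminormal P) {x : Fin n → ℝ} (hx : IsGap P x) :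
    IsGap P ((2 : ℝ) • x) ∨ IsGap P ((3 : ℝ) • x) := by
  by_contra! h
  exact hsn x hx.choose_spec.1 h.1 h.2 hx

theorem isNormal_of_forall_not_isGap {n : ℕ} {P : Set (Fin n → ℝ)}
    (h : ∀ x, ¬ IsGap P x) : IsNormal P := fun k x hx hkx => by
  by_contra hnot
  exact h x ⟨k, hx, hkx, hnot⟩

theorem seminormal_of_finitely_many_gaps_is_normal_general {n : ℕ} (P : Set (Fin n → ℝ))
    (hfin : {x | IsGap P x}.Finite) (hsn : IsSeminormal P) :
    IsNormal P := by
  have hgaps : {x | IsGap P x} = ∅ := by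
    refine hfin.eq_empty_of_forall_exists_smul_mem (𝕜 := ℝ) (not_isGap_zero P) fun x hx => ?_
    rcases hsn.isGap_two_smul_or_isGap_three_smul hx with h2 | h3
    · exact ⟨2, by norm_num, h2⟩
    · exact ⟨3, by norm_num, h3⟩
  exact isNormal_of_forall_not_isGap fun x hx => hgaps.subset hx

/-- a lattice polytope with only finitely many gaps (i.e. a very ample lattice
polytope) that is seminormal is normal. -/
theorem seminormal_of_finitely_many_gaps_is_normal {n : ℕ} (P : Set (Fin n → ℝ))
    (hP : IsLatticePolytope P) (hfin : {x | IsGap P x}.Finite) (hsn : IsSeminormal P) :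
    IsNormal P :=
  seminormal_of_finitely_many_gaps_is_normal_general P hfin hsn
end

section
/- A loopless graph G is properly 4-colorable if and only if the all-twos vector (2,2,…,2) ∈ ℝ^E is a sum of three cut vectors of G. -/
open scoped Classical Pointwise

/-- A multigraph is given by `ends : E → V × V`.  `cutVec ends A` is the cut vector
`δ_{A|Aᶜ}` of the cut with parts `A` and `Aᶜ`: value `1` on edges separated by the cut,
value `0` on edges within one part. -/
noncomputable def cutVec {V E : Type} (ends : E → V × V) (A : Set V) : E → ℝ :=
  fun e => if ((ends e).1 ∈ A ↔ (ends e).2 ∈ A) then 0 else 1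

/-- The cut polytope `Cut□(G)`: the convex hull of all cut vectors. -/
noncomputable def cutPolytope {V E : Type} (ends : E → V × V) : Set (E → ℝ) :=
  convexHull ℝ {x | ∃ A : Set V, x = cutVec ends A}

/-!
Take the four colours to be `Bool × Bool`, i.e. the Klein four-group. Its three nonzero
linear functionals `x.1`, `x.2`, `x.1 ^^ x.2` give three cuts, and two distinct colours are
separated by exactly two of them, so a proper colouring yields `2 = δ₁ + δ₂ + δ₃`.
Conversely, if three cuts sum to `2` then every edge is cut by at least one of the first two,
so the pair of memberships `(v ∈ A₁, v ∈ A₂)` is a proper colouring with four colours.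
-/

section

variable {V E : Type} (ends : E → V × V)

def IsProperColoring {α : Type} (c : V → α) : Prop :=
  ∀ e, c (ends e).1 ≠ c (ends e).2

variable {ends}

theorem IsProperColoring.comp_injective {α β : Type} {c : V → α} (hc : IsProperColoring ends c)
    {f : α → β} (hf : Function.Injective f) : IsProperColoring ends (f ∘ c) :=
  fun e h => hc e (hf h)

variable (ends) in
theorem exists_isProperColoring_congr {α β : Type} (σ : α ≃ β) :
    (∃ c : V → α, IsProperColoring ends c) ↔ ∃ c : V → β, IsProperColoring ends c :=
  ⟨fun ⟨c, hc⟩ => ⟨σ ∘ c, hc.comp_injective σ.injective⟩,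
    fun ⟨c, hc⟩ => ⟨σ.symm ∘ c, hc.comp_injective σ.symm.injective⟩⟩

theorem cutVec_setOf_eq_true (f : V → Bool) (e : E) :
    cutVec ends {v | f v = true} e = if f (ends e).1 = f (ends e).2 then 0 else 1 := by
  simp only [cutVec, Set.mem_ofPred_eq, Bool.coe_iff_coe]

theorem cutVec_le_one (A : Set V) (e : E) : cutVec ends A e ≤ 1 := by
  unfold cutVec
  split_ifs <;> norm_num

theorem cutVec_eq_zero_of_iff {A : Set V} {e : E} (h : (ends e).1 ∈ A ↔ (ends e).2 ∈ A) :
    cutVec ends A e = 0 :=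
  if_pos h

theorem separating_functionals_count_eq_two {x y : Bool × Bool} (h : x ≠ y) :
    ((if x.1 = y.1 then 0 else 1) + (if x.2 = y.2 then 0 else 1) +
      (if (x.1 ^^ x.2) = (y.1 ^^ y.2) then 0 else 1) : ℝ) = 2 := by
  obtain ⟨_ | _, _ | _⟩ := x <;> obtain ⟨_ | _, _ | _⟩ := y <;> simp_all <;> norm_num

theorem IsProperColoring.all_twos_eq_sum_cutVec {c : V → Bool × Bool}
    (hc : IsProperColoring ends c) :
    (fun _ : E => (2 : ℝ)) = cutVec ends {v | (c v).1 = true} + cutVec ends {v | (c v).2 = true} +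
      cutVec ends {v | ((c v).1 ^^ (c v).2) = true} := by
  funext e
  simp only [Pi.add_apply, cutVec_setOf_eq_true]
  exact (separating_functionals_count_eq_two (hc e)).symm

theorem isProperColoring_of_all_twos_eq_sum_cutVec {A₁ A₂ A₃ : Set V}
    (h : (fun _ : E => (2 : ℝ)) = cutVec ends A₁ + cutVec ends A₂ + cutVec ends A₃) :
    IsProperColoring ends fun v => (decide (v ∈ A₁), decide (v ∈ A₂)) := by
  intro e hsame
  obtain ⟨h₁, h₂⟩ := Prod.ext_iff.mp hsame
  have hsum := congrFun h e
  simp only [Pi.add_apply, cutVec_eq_zero_of_iff (decide_eq_decide.mp h₁),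
    cutVec_eq_zero_of_iff (decide_eq_decide.mp h₂)] at hsum
  linarith [cutVec_le_one (ends := ends) A₃ e]

end

theorem four_colorable_iff_all_twos_sum_of_three_cuts_general {V E : Type}
    (ends : E → V × V) :
    (∃ c : V → Fin 4, ∀ e, c (ends e).1 ≠ c (ends e).2) ↔
    (∃ A₁ A₂ A₃ : Set V,
      (fun _ : E => (2 : ℝ)) = cutVec ends A₁ + cutVec ends A₂ + cutVec ends A₃) := by
  change (∃ c : V → Fin 4, IsProperColoring ends c) ↔ _
  rw [exists_isProperColoring_congr ends (Fintype.equivOfCardEq rfl : Fin 4 ≃ Bool × Bool)]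
  constructor
  · rintro ⟨c, hc⟩
    exact ⟨_, _, _, hc.all_twos_eq_sum_cutVec⟩
  · rintro ⟨A₁, A₂, A₃, h⟩
    exact ⟨_, isProperColoring_of_all_twos_eq_sum_cutVec h⟩

/-- a loopless graph is properly 4-colorable iff the all-twos vector is a sum
of three cut vectors. -/
theorem four_colorable_iff_all_twos_sum_of_three_cuts {V E : Type} [Fintype V] [Fintype E]
    (ends : E → V × V) (hloop : ∀ e, (ends e).1 ≠ (ends e).2) :
    (∃ c : V → Fin 4, ∀ e, c (ends e).1 ≠ c (ends e).2) ↔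
    (∃ A₁ A₂ A₃ : Set V,
      (fun _ : E => (2 : ℝ)) = cutVec ends A₁ + cutVec ends A₂ + cutVec ends A₃) :=
  four_colorable_iff_all_twos_sum_of_three_cuts_general ends
end

section
/- If a point p ∈ ℝ^E is a sum of three cut vectors of a graph G, then for every cut A|B, the image φ_{A|B}(p) is also a sum of three cut vectors of G; conversely, since φ_{A|B} is an involution, p is a sum of three cut vectors if and only if φ_{A|B}(p) is. -/
/-!
Switching by `A` is the affine map `x ↦ phiDil ends A 1 x`, and it sends the cut vector of `C`
to the cut vector of `C ∆ A`. Since `phiDil` is additive in the pair (dilation factor, point),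
`phiDil ends A 3` sends a sum of three cut vectors to the sum of the three switched ones; being
an involution, it also reflects such sums.
-/

open scoped Classical Pointwise

/-- The switching map of the cut `A|Aᶜ` acting on the `k`-th dilation: `x_e ↦ k - x_e` on
edges separated by the cut, identity on the other coordinates (for `k = 1` this is the usual
switching map `φ_{A|B}`; for points that are sums of `k` cut vectors the appropriate affine
correction replaces `1 - x_e` by `k - x_e`). -/
noncomputable def phiDil {V E : Type} (ends : E → V × V) (A : Set V) (k : ℝ)
    (x : E → ℝ) : E → ℝ :=
  fun e => if ((ends e).1 ∈ A ↔ (ends e).2 ∈ A) then x e else k - x e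

theorem Set.mem_symmDiff_iff_mem_symmDiff {α : Type*} (s t : Set α) (a b : α) :
    (a ∈ symmDiff s t ↔ b ∈ symmDiff s t) ↔ ((a ∈ s ↔ b ∈ s) ↔ (a ∈ t ↔ b ∈ t)) := by
  simp only [Set.mem_symmDiff]
  tauto

section Switching

variable {V E : Type} (ends : E → V × V) (A : Set V)

lemma phiDil_add (k l : ℝ) (x y : E → ℝ) :
    phiDil ends A (k + l) (x + y) = phiDil ends A k x + phiDil ends A l y := by
  funext e
  simp only [phiDil, Pi.add_apply]
  split_ifs <;> ring

lemma phiDil_involutive (k : ℝ) : Function.Involutive (phiDil ends A k) := by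
  intro x
  funext e
  simp only [phiDil]
  split_ifs <;> ring

lemma phiDil_one_cutVec (C : Set V) :
    phiDil ends A 1 (cutVec ends C) = cutVec ends (symmDiff C A) := by
  funext e
  simp only [phiDil, cutVec, Set.mem_symmDiff_iff_mem_symmDiff]
  by_cases hA : (ends e).1 ∈ A ↔ (ends e).2 ∈ A <;>
    by_cases hC : (ends e).1 ∈ C ↔ (ends e).2 ∈ C <;>
    simp [hA, hC]

lemma phiDil_three_cutVec_add (C₁ C₂ C₃ : Set V) :
    phiDil ends A 3 (cutVec ends C₁ + cutVec ends C₂ + cutVec ends C₃) =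
      cutVec ends (symmDiff C₁ A) + cutVec ends (symmDiff C₂ A) +
        cutVec ends (symmDiff C₃ A) := by
  rw [show (3 : ℝ) = 1 + 1 + 1 by norm_num, phiDil_add, phiDil_add, phiDil_one_cutVec,
    phiDil_one_cutVec, phiDil_one_cutVec]

end Switching

theorem sum_of_three_cuts_iff_phi_general {V E : Type}
    (ends : E → V × V) (A : Set V) (p : E → ℝ) :
    (∃ C₁ C₂ C₃ : Set V, p = cutVec ends C₁ + cutVec ends C₂ + cutVec ends C₃) ↔
    (∃ C₁ C₂ C₃ : Set V,
      phiDil ends A 3 p = cutVec ends C₁ + cutVec ends C₂ + cutVec ends C₃) := by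
  constructor
  · rintro ⟨C₁, C₂, C₃, rfl⟩
    exact ⟨_, _, _, phiDil_three_cutVec_add ends A C₁ C₂ C₃⟩
  · rintro ⟨C₁, C₂, C₃, h⟩
    refine ⟨symmDiff C₁ A, symmDiff C₂ A, symmDiff C₃ A, ?_⟩
    rw [← phiDil_involutive ends A 3 p, h, phiDil_three_cutVec_add]

/-- `p` is a sum of three cut vectors iff its image under the switching map of
any cut `A|B` (acting on the third dilation) is a sum of three cut vectors; both directions
hold since the switching map is an involution. -/
theorem sum_of_three_cuts_iff_phi {V E : Type} [Fintype V] [Fintype E]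
    (ends : E → V × V) (A : Set V) (p : E → ℝ) :
    (∃ C₁ C₂ C₃ : Set V, p = cutVec ends C₁ + cutVec ends C₂ + cutVec ends C₃) ↔
    (∃ C₁ C₂ C₃ : Set V,
      phiDil ends A 3 p = cutVec ends C₁ + cutVec ends C₂ + cutVec ends C₃) :=
  sum_of_three_cuts_iff_phi_general ends A p
end

section
/- Let p be a lattice point of 2·Cut□(G) such that p(e) = 1 for all edges e. Then G is bipartite. -/
/-!
Reduce modulo 2. The cut vector `δ_A` is congruent to `e ↦ χ_A(u) + χ_A(v)`, so every point of
the lattice generated by cut vectors is congruent, coordinatewise, to `e ↦ g(u) + g(v)` for some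
integer vertex labelling `g`. If the point is the all-ones vector, `g` changes parity along
every edge, and the parity classes of `g` are the two sides of a bipartition.
-/

open scoped Classical Pointwise

def parityCoboundaries {V E : Type} (ends : E → V × V) : AddSubgroup (E → ℝ) where
  carrier := {x | ∃ g : V → ℤ, ∀ e, ∃ k : ℤ, x e = g (ends e).1 + g (ends e).2 + 2 * k}
  zero_mem' := ⟨0, fun _ => ⟨0, by simp⟩⟩
  add_mem' := by
    rintro x y ⟨g, hg⟩ ⟨h, hh⟩
    refine ⟨g + h, fun e => ?_⟩
    obtain ⟨k, hk⟩ := hg e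
    obtain ⟨l, hl⟩ := hh e
    exact ⟨k + l, by simp only [Pi.add_apply, hk, hl]; push_cast; ring⟩
  neg_mem' := by
    rintro x ⟨g, hg⟩
    refine ⟨-g, fun e => ?_⟩
    obtain ⟨k, hk⟩ := hg e
    exact ⟨-k, by simp only [Pi.neg_apply, hk]; push_cast; ring⟩

theorem cutVec_mem_parityCoboundaries {V E : Type} (ends : E → V × V) (A : Set V) :
    cutVec ends A ∈ parityCoboundaries ends := by
  refine ⟨fun v => if v ∈ A then 1 else 0, fun e => ?_⟩
  -- `[u ∈ A] + [v ∈ A] - 2 [u ∈ A ∧ v ∈ A]` is `1` exactly when the cut separates `u`, `v`.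
  refine ⟨if (ends e).1 ∈ A ∧ (ends e).2 ∈ A then -1 else 0, ?_⟩
  unfold cutVec
  by_cases h₁ : (ends e).1 ∈ A <;> by_cases h₂ : (ends e).2 ∈ A <;> norm_num [h₁, h₂]

theorem closure_cutVec_le_parityCoboundaries {V E : Type} (ends : E → V × V) :
    AddSubgroup.closure {x : E → ℝ | ∃ A : Set V, x = cutVec ends A} ≤
      parityCoboundaries ends :=
  (AddSubgroup.closure_le _).mpr <| by
    rintro x ⟨A, rfl⟩
    exact cutVec_mem_parityCoboundaries ends A

theorem exists_bipartition_of_odd_add {V E : Type} (ends : E → V × V) (g : V → ℤ)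
    (hodd : ∀ e, Odd (g (ends e).1 + g (ends e).2)) :
    ∃ X Y : Set V, X ∪ Y = Set.univ ∧ X ∩ Y = ∅ ∧
      ∀ e, ((ends e).1 ∈ X ∧ (ends e).2 ∈ Y) ∨ ((ends e).1 ∈ Y ∧ (ends e).2 ∈ X) := by
  refine ⟨{v | Even (g v)}, {v | Odd (g v)}, ?_, ?_, fun e => ?_⟩
  · ext v
    simp [Int.even_or_odd]
  · ext v
    simp
  · rcases Int.even_or_odd (g (ends e).1) with h | h
    · exact Or.inl ⟨h, (Int.odd_add'.mp (hodd e)).mpr h⟩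
    · exact Or.inr ⟨h, (Int.odd_add.mp (hodd e)).mp h⟩

theorem all_ones_lattice_point_implies_bipartite_general {V E : Type}
    (ends : E → V × V) (p : E → ℝ)
    (hlat : p ∈ AddSubgroup.closure {x : E → ℝ | ∃ A : Set V, x = cutVec ends A})
    (hone : ∀ e, p e = 1) :
    ∃ X Y : Set V, X ∪ Y = Set.univ ∧ X ∩ Y = ∅ ∧
      ∀ e, ((ends e).1 ∈ X ∧ (ends e).2 ∈ Y) ∨ ((ends e).1 ∈ Y ∧ (ends e).2 ∈ X) := by
  obtain ⟨g, hg⟩ := closure_cutVec_le_parityCoboundaries ends hlat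
  refine exists_bipartition_of_odd_add ends g fun e => ?_
  obtain ⟨k, hk⟩ := hg e
  have hk' : (1 : ℤ) = g (ends e).1 + g (ends e).2 + 2 * k := by
    exact_mod_cast (hone e).symm.trans hk
  exact ⟨-k, by linarith⟩

/-- if `p` is a lattice point of `2·Cut□(G)` (a point of the second dilation
lying in the lattice generated by the cut vectors) with `p(e) = 1` for all edges, then `G`
is bipartite. -/
theorem all_ones_lattice_point_implies_bipartite {V E : Type} [Fintype V] [Fintype E]
    (ends : E → V × V) (p : E → ℝ)
    (hp : p ∈ (2 : ℝ) • cutPolytope ends)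
    (hlat : p ∈ AddSubgroup.closure {x : E → ℝ | ∃ A : Set V, x = cutVec ends A})
    (hone : ∀ e, p e = 1) :
    ∃ X Y : Set V, X ∪ Y = Set.univ ∧ X ∩ Y = ∅ ∧
      ∀ e, ((ends e).1 ∈ X ∧ (ends e).2 ∈ Y) ∨ ((ends e).1 ∈ Y ∧ (ends e).2 ∈ X) :=
  all_ones_lattice_point_implies_bipartite_general ends p hlat hone
end

section
/- Assuming the four color theorem (every loopless planar graph is properly 4-colorable), every lattice point p of 3·Cut□(G) for a loopless planar (multi)graph G with p(e) ∈ {1,2} for all edges e and such that the set E₁ = {e : p(e) = 1} is the edge set of a cut A|B, is a sum of three cut vectors of G. -/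
/-!
Take a proper 4-colouring `c` and the three cuts `Sᵢ = c⁻¹{0, i}`, `i = 1, 2, 3`: an edge whose
ends have distinct colours is cut by exactly two of them, so `δ_{S₁} + δ_{S₂} + δ_{S₃} = 2`.
Switching by `A` (replacing each `Sᵢ` by `Sᵢ ∆ A`) flips every cut vector on the edges of
`δ_A`, turning the value `2` there into `1`; the resulting sum is `2 - δ_A`, which is `p`.
-/

open scoped Classical Pointwise

section CutVec

variable {V E : Type} (ends : E → V × V)

lemma cutVec_eq_zero_or_eq_one (A : Set V) (e : E) :
    cutVec ends A e = 0 ∨ cutVec ends A e = 1 := by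
  unfold cutVec
  split_ifs <;> simp

lemma cutVec_symmDiff (S A : Set V) (e : E) :
    cutVec ends (symmDiff S A) e =
      cutVec ends S e + cutVec ends A e - 2 * cutVec ends S e * cutVec ends A e := by
  simp only [cutVec, Set.mem_symmDiff]
  split_ifs <;> (try norm_num) <;> tauto

lemma sum_cutVec_colorPairs_eq_two {c : V → Fin 4} {e : E} (hc : c (ends e).1 ≠ c (ends e).2) :
    cutVec ends {v | c v = 0 ∨ c v = 1} e + cutVec ends {v | c v = 0 ∨ c v = 2} e +
      cutVec ends {v | c v = 0 ∨ c v = 3} e = 2 := by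
  simp only [cutVec, Set.mem_ofPred_eq]
  obtain ⟨a, ha⟩ : ∃ a, c (ends e).1 = a := ⟨_, rfl⟩
  obtain ⟨b, hb⟩ : ∃ b, c (ends e).2 = b := ⟨_, rfl⟩
  simp only [ha, hb] at hc ⊢
  fin_cases a <;> fin_cases b <;> simp [Fin.ext_iff] at hc ⊢ <;> norm_num

lemma sum_cutVec_symmDiff_of_sum_eq_two {S₁ S₂ S₃ : Set V} {e : E}
    (h : cutVec ends S₁ e + cutVec ends S₂ e + cutVec ends S₃ e = 2) (A : Set V) :
    cutVec ends (symmDiff S₁ A) e + cutVec ends (symmDiff S₂ A) e +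
      cutVec ends (symmDiff S₃ A) e = 2 - cutVec ends A e := by
  simp only [cutVec_symmDiff]
  linear_combination (1 - 2 * cutVec ends A e) * h

end CutVec

theorem lattice_point_one_two_sum_of_three_cuts_general
    (Planar : ∀ {V' E' : Type}, (E' → V' × V') → Prop)
    (fourCT : ∀ {V' E' : Type} [Fintype V'] [Fintype E'] (ends' : E' → V' × V'),
      (∀ e, (ends' e).1 ≠ (ends' e).2) → Planar ends' →
      ∃ c : V' → Fin 4, ∀ e, c (ends' e).1 ≠ c (ends' e).2)
    {V E : Type} [Fintype V] [Fintype E] (ends : E → V × V)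
    (hloop : ∀ e, (ends e).1 ≠ (ends e).2) (hplanar : Planar ends)
    (p : E → ℝ)
    (hval : ∀ e, p e = 1 ∨ p e = 2)
    (A : Set V) (hA : ∀ e, p e = 1 ↔ cutVec ends A e = 1) :
    ∃ A₁ A₂ A₃ : Set V, p = cutVec ends A₁ + cutVec ends A₂ + cutVec ends A₃ := by
  obtain ⟨c, hc⟩ := fourCT ends hloop hplanar
  refine ⟨symmDiff {v | c v = 0 ∨ c v = 1} A, symmDiff {v | c v = 0 ∨ c v = 2} A,
    symmDiff {v | c v = 0 ∨ c v = 3} A, funext fun e => ?_⟩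
  rw [Pi.add_apply, Pi.add_apply,
    sum_cutVec_symmDiff_of_sum_eq_two ends (sum_cutVec_colorPairs_eq_two ends (hc e))]
  rcases cutVec_eq_zero_or_eq_one ends A e with hδ | hδ
  · have hp : p e ≠ 1 := by rw [Ne, hA e, hδ]; norm_num
    rw [hδ, (hval e).resolve_left hp]; norm_num
  · rw [hδ, (hA e).2 hδ]; norm_num

/-- assume the four color theorem (for an abstract planarity predicate
`Planar` on multigraphs: every loopless planar multigraph is properly 4-colorable).  Let
`G` be a loopless planar multigraph and let `p` be a lattice point of `3·Cut□(G)` with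
`p(e) ∈ {1,2}` for every edge and such that `E₁ = {e : p(e) = 1}` is exactly the set of
edges of a cut `A|B`.  Then `p` is a sum of three cut vectors of `G`. -/
theorem lattice_point_one_two_sum_of_three_cuts
    (Planar : ∀ {V' E' : Type}, (E' → V' × V') → Prop)
    (fourCT : ∀ {V' E' : Type} [Fintype V'] [Fintype E'] (ends' : E' → V' × V'),
      (∀ e, (ends' e).1 ≠ (ends' e).2) → Planar ends' →
      ∃ c : V' → Fin 4, ∀ e, c (ends' e).1 ≠ c (ends' e).2)
    {V E : Type} [Fintype V] [Fintype E] (ends : E → V × V)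
    (hloop : ∀ e, (ends e).1 ≠ (ends e).2) (hplanar : Planar ends)
    (p : E → ℝ) (hp : p ∈ (3 : ℝ) • cutPolytope ends)
    (hval : ∀ e, p e = 1 ∨ p e = 2)
    (A : Set V) (hA : ∀ e, p e = 1 ↔ cutVec ends A e = 1) :
    ∃ A₁ A₂ A₃ : Set V, p = cutVec ends A₁ + cutVec ends A₂ + cutVec ends A₃ :=
  lattice_point_one_two_sum_of_three_cuts_general Planar fourCT ends hloop hplanar p hval A hA
end

section
/- If E₀ ⊆ E(G) and p is a point in 3·Cut□(G) with p(e) = 0 for all e ∈ E₀, and if the contracted multigraph G/E₀ is loopless, then p (viewed as a vector indexed by E(G) \ E₀, identifying edges under contraction) lies in 3·Cut□(G/E₀), and a decomposition of p as a sum of three cut vectors of G/E₀ lifts to a decomposition of p as a sum of three cut vectors of G. -/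
/-!
Since `p(e) = 0` on `E₀` and cut vectors are nonnegative, every cut that carries positive weight
in a convex decomposition of `p / 3` separates no edge of `E₀`, so it is a union of classes of
the contraction and descends to a cut of `G/E₀`. Conversely the preimage of a cut of `G/E₀` is a
cut of `G` separating no edge of `E₀`, so a decomposition into cuts of `G/E₀` pulls back.
-/

open scoped Classical Pointwise

open Set

theorem mem_convexHull_sep_of_nonneg {ι : Type} {S : Set (ι → ℝ)} (hS : ∀ y ∈ S, 0 ≤ y)
    {x : ι → ℝ} (hx : x ∈ convexHull ℝ S) {I : Set ι} (hxI : ∀ i ∈ I, x i = 0) :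
    x ∈ convexHull ℝ {y ∈ S | ∀ i ∈ I, y i = 0} := by
  rw [convexHull_eq] at hx
  obtain ⟨κ, t, w, z, hw₀, hw₁, hz, rfl⟩ := hx
  have hvanish : ∀ k ∈ t, w k ≠ 0 → ∀ i ∈ I, z k i = 0 := by
    intro k hk hwk i hi
    have hsum : ∑ j ∈ t, w j * z j i = 0 := by
      simpa [Finset.centerMass_eq_of_sum_1 _ _ hw₁] using hxI i hi
    have hterm := (Finset.sum_eq_zero_iff_of_nonneg fun j hj =>
      mul_nonneg (hw₀ j hj) (hS _ (hz j hj) i)).mp hsum k hk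
    exact (mul_eq_zero.mp hterm).resolve_left hwk
  rw [← Finset.centerMass_filter_ne_zero]
  refine Finset.centerMass_mem_convexHull _ (fun k hk => hw₀ k (Finset.mem_filter.mp hk).1) ?_ ?_
  · rw [Finset.sum_filter_ne_zero, hw₁]
    exact one_pos
  · intro k hk
    obtain ⟨hkt, hwk⟩ := Finset.mem_filter.mp hk
    exact ⟨hz k hkt, hvanish k hkt hwk⟩

variable {V E : Type}

theorem cutVec_nonneg (ends : E → V × V) (A : Set V) : 0 ≤ cutVec ends A := fun e => by
  unfold cutVec
  split_ifs <;> norm_num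

theorem cutVec_eq_zero_iff {ends : E → V × V} {A : Set V} {e : E} :
    cutVec ends A e = 0 ↔ ((ends e).1 ∈ A ↔ (ends e).2 ∈ A) := by
  unfold cutVec
  split_ifs <;> simp_all

def contractRel (ends : E → V × V) (E₀ : Set E) : V → V → Prop :=
  Relation.EqvGen fun u w => ∃ e ∈ E₀, ends e = (u, w) ∨ ends e = (w, u)

def contractEnds (ends : E → V × V) (E₀ : Set E) :
    {e : E // e ∉ E₀} → Quot (contractRel ends E₀) × Quot (contractRel ends E₀) :=
  fun e => (Quot.mk _ (ends e.1).1, Quot.mk _ (ends e.1).2)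

variable {ends : E → V × V} {E₀ : Set E}

namespace contractRel

theorem mk_eq_mk_iff {u v : V} :
    Quot.mk (contractRel ends E₀) u = Quot.mk _ v ↔ contractRel ends E₀ u v := by
  rw [Quot.eq]
  exact Relation.EqvGen.is_equivalence _ |>.eqvGen_iff

theorem mem_iff_mem_of_rel {A : Set V} (hA : ∀ e ∈ E₀, cutVec ends A e = 0) {u v : V}
    (huv : contractRel ends E₀ u v) : u ∈ A ↔ v ∈ A := by
  have hiff : Equivalence fun u v : V => (u ∈ A ↔ v ∈ A) :=
    ⟨fun _ => Iff.rfl, Iff.symm, Iff.trans⟩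
  refine hiff.eqvGen_iff.mp (huv.mono ?_)
  rintro u v ⟨e, he, h | h⟩
  · simpa [h] using cutVec_eq_zero_iff.mp (hA e he)
  · simpa [h] using (cutVec_eq_zero_iff.mp (hA e he)).symm

theorem preimage_image_mk {A : Set V} (hA : ∀ e ∈ E₀, cutVec ends A e = 0) :
    Quot.mk (contractRel ends E₀) ⁻¹' (Quot.mk _ '' A) = A := by
  ext v
  simp only [mem_preimage, mem_image, mk_eq_mk_iff]
  exact ⟨fun ⟨u, hu, huv⟩ => (mem_iff_mem_of_rel hA huv).mp hu, fun hv => ⟨v, hv, .refl _⟩⟩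

end contractRel

namespace contractEnds

theorem cutVec_apply (B : Set (Quot (contractRel ends E₀))) (e : {e : E // e ∉ E₀}) :
    cutVec (contractEnds ends E₀) B e = cutVec ends (Quot.mk _ ⁻¹' B) e.1 :=
  rfl

theorem cutVec_preimage_eq_zero (B : Set (Quot (contractRel ends E₀))) {e : E} (he : e ∈ E₀) :
    cutVec ends (Quot.mk _ ⁻¹' B) e = 0 := by
  have hends : Quot.mk (contractRel ends E₀) (ends e).1 = Quot.mk _ (ends e).2 :=
    contractRel.mk_eq_mk_iff.mpr (.rel _ _ ⟨e, he, .inl rfl⟩)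
  rw [cutVec_eq_zero_iff, mem_preimage, mem_preimage, hends]

theorem restrict_cutVec {A : Set V} (hA : ∀ e ∈ E₀, cutVec ends A e = 0) :
    (fun e : {e : E // e ∉ E₀} => cutVec ends A e.1) =
      cutVec (contractEnds ends E₀) (Quot.mk _ '' A) := by
  funext e
  rw [cutVec_apply, contractRel.preimage_image_mk hA]

theorem restrict_mem_cutPolytope {q : E → ℝ} (hq : q ∈ cutPolytope ends)
    (hq0 : ∀ e ∈ E₀, q e = 0) :
    (fun e : {e : E // e ∉ E₀} => q e.1) ∈ cutPolytope (contractEnds ends E₀) := by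
  have hface := mem_convexHull_sep_of_nonneg (by rintro _ ⟨A, rfl⟩; exact cutVec_nonneg ends A)
    hq hq0
  have himage := mem_image_of_mem (LinearMap.funLeft ℝ ℝ (Subtype.val : {e // e ∉ E₀} → E)) hface
  rw [LinearMap.image_convexHull] at himage
  refine convexHull_mono ?_ himage
  rintro _ ⟨_, ⟨⟨A, rfl⟩, hA⟩, rfl⟩
  exact ⟨_, restrict_cutVec hA⟩

theorem lift_sum_three_cutVec {p : E → ℝ} (hp0 : ∀ e ∈ E₀, p e = 0)
    {B₁ B₂ B₃ : Set (Quot (contractRel ends E₀))}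
    (hB : (fun e : {e : E // e ∉ E₀} => p e.1) = cutVec (contractEnds ends E₀) B₁ +
      cutVec (contractEnds ends E₀) B₂ + cutVec (contractEnds ends E₀) B₃) :
    p = cutVec ends (Quot.mk _ ⁻¹' B₁) + cutVec ends (Quot.mk _ ⁻¹' B₂) +
      cutVec ends (Quot.mk _ ⁻¹' B₃) := by
  funext e
  by_cases he : e ∈ E₀
  · simp [hp0 e he, cutVec_preimage_eq_zero _ he]
  · exact congrFun hB ⟨e, he⟩

end contractEnds

theorem contraction_lemma_general {V E : Type}
    (ends : E → V × V) (E₀ : Set E) (p : E → ℝ)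
    (hp : p ∈ (3 : ℝ) • cutPolytope ends)
    (hp0 : ∀ e ∈ E₀, p e = 0)
    (r : V → V → Prop)
    (hr : r = Relation.EqvGen (fun u w => ∃ e ∈ E₀, ends e = (u, w) ∨ ends e = (w, u)))
    (ends' : {e : E // e ∉ E₀} → Quot r × Quot r)
    (hends' : ∀ e, ends' e = (Quot.mk r (ends e.1).1, Quot.mk r (ends e.1).2)) :
    (fun e : {e : E // e ∉ E₀} => p e.1) ∈ (3 : ℝ) • cutPolytope ends' ∧
    ∀ B₁ B₂ B₃ : Set (Quot r),
      ((fun e : {e : E // e ∉ E₀} => p e.1) =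
        cutVec ends' B₁ + cutVec ends' B₂ + cutVec ends' B₃) →
      ∃ A₁ A₂ A₃ : Set V, p = cutVec ends A₁ + cutVec ends A₂ + cutVec ends A₃ := by
  subst hr
  obtain rfl : ends' = contractEnds ends E₀ := funext hends'
  refine ⟨?_, fun B₁ B₂ B₃ hB => ⟨_, _, _, contractEnds.lift_sum_three_cutVec hp0 hB⟩⟩
  obtain ⟨q, hq, rfl⟩ := hp
  have hq0 : ∀ e ∈ E₀, q e = 0 := fun e he => by
    simpa using hp0 e he
  exact ⟨_, contractEnds.restrict_mem_cutPolytope hq hq0, rfl⟩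

/-- let `E₀` be a set of edges of `G` and `p ∈ 3·Cut□(G)` with `p(e) = 0` for
all `e ∈ E₀`.  Let `G/E₀` be the contraction: its vertices are the classes of the
equivalence relation `r` generated by the edges of `E₀`, its edges are the edges outside
`E₀`, with induced endpoints `ends'`.  If `G/E₀` is loopless, then `p` (restricted to the
edges of `G/E₀`) lies in `3·Cut□(G/E₀)`, and every decomposition of this restriction as a
sum of three cut vectors of `G/E₀` lifts to a decomposition of `p` as a sum of three cut
vectors of `G`. -/
theorem contraction_lemma {V E : Type} [Fintype V] [Fintype E]
    (ends : E → V × V) (E₀ : Set E) (p : E → ℝ)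
    (hp : p ∈ (3 : ℝ) • cutPolytope ends)
    (hp0 : ∀ e ∈ E₀, p e = 0)
    (r : V → V → Prop)
    (hr : r = Relation.EqvGen (fun u w => ∃ e ∈ E₀, ends e = (u, w) ∨ ends e = (w, u)))
    (ends' : {e : E // e ∉ E₀} → Quot r × Quot r)
    (hends' : ∀ e, ends' e = (Quot.mk r (ends e.1).1, Quot.mk r (ends e.1).2))
    (hloopless : ∀ e, (ends' e).1 ≠ (ends' e).2) :
    (fun e : {e : E // e ∉ E₀} => p e.1) ∈ (3 : ℝ) • cutPolytope ends' ∧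
    ∀ B₁ B₂ B₃ : Set (Quot r),
      ((fun e : {e : E // e ∉ E₀} => p e.1) =
        cutVec ends' B₁ + cutVec ends' B₂ + cutVec ends' B₃) →
      ∃ A₁ A₂ A₃ : Set V, p = cutVec ends A₁ + cutVec ends A₂ + cutVec ends A₃ :=
  contraction_lemma_general ends E₀ p hp hp0 r hr ends' hends'
end
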